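/- Let R be a ring. Suppose given chain maps f : A → B, g : A → C and f' : A' → B', g' : A' → C' between chain complexes of R-modules, together with chain homotopy equivalences i : A → A', j : B → B', k : C → C' such that j ∘ f is chain homotopic to f' ∘ i and k ∘ g is chain homotopic to g' ∘ i. Then the mapping cone of the chain map A → B ⊕ C with components f and −g is isomorphic in the derived category of R-modules to the mapping cone of the chain map A' → B' ⊕ C' with components f' and −g'. -/

import Mathlib

open CategoryTheory CategoryTheory.Limits

/-- If two pushout diagrams `B ← A → C` and `B' ← A' → C'` of chain complexes of
`R`-modules are related by chain homotopy equivalences commuting up to chain homotopy,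
then the corresponding homotopy pushouts (mapping cones of `(f,-g) : A ⟶ B ⊞ C` and
`(f',-g') : A' ⟶ B' ⊞ C'`) are isomorphic in the derived category. -/
theorem homotopyPushout_derived_iso_of_homotopyEquiv
    (R : Type) [Ring R]
    (A B C A' B' C' : CochainComplex (ModuleCat R) ℤ)
    (f : A ⟶ B) (g : A ⟶ C) (f' : A' ⟶ B') (g' : A' ⟶ C')
    (i : HomotopyEquiv A A') (j : HomotopyEquiv B B') (k : HomotopyEquiv C C')
    (hf : Nonempty (Homotopy (f ≫ j.hom) (i.hom ≫ f')))
    (hg : Nonempty (Homotopy (g ≫ k.hom) (i.hom ≫ g'))) :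
    letI : HasDerivedCategory (ModuleCat R) := HasDerivedCategory.standard _
    Nonempty (DerivedCategory.Q.obj (CochainComplex.mappingCone (biprod.lift f (-g))) ≅
      DerivedCategory.Q.obj (CochainComplex.mappingCone (biprod.lift f' (-g')))) := by
  letI : HasDerivedCategory (ModuleCat R) := HasDerivedCategory.standard _
  set Qt := HomotopyCategory.quotient (ModuleCat R) (ComplexShape.up ℤ) with hQt
  haveI : Limits.PreservesBinaryBiproducts Qt :=
    Limits.preservesBinaryBiproducts_of_preservesBiproducts Qt
  -- the two distinguished triangles
  have hT₁ := HomotopyCategory.mappingCone_triangleh_distinguished (biprod.lift f (-g))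
  have hT₂ := HomotopyCategory.mappingCone_triangleh_distinguished (biprod.lift f' (-g'))
  -- isomorphisms of the first two objects
  let e₁ : Qt.obj A ≅ Qt.obj A' := HomotopyCategory.isoOfHomotopyEquiv i
  let eB : Qt.obj B ≅ Qt.obj B' := HomotopyCategory.isoOfHomotopyEquiv j
  let eC : Qt.obj C ≅ Qt.obj C' := HomotopyCategory.isoOfHomotopyEquiv k
  let e₂ : Qt.obj (B ⊞ C) ≅ Qt.obj (B' ⊞ C') :=
    Qt.mapBiprod B C ≪≫ biprod.mapIso eB eC ≪≫ (Qt.mapBiprod B' C').symm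
  have hf' : Qt.map f ≫ Qt.map j.hom = Qt.map i.hom ≫ Qt.map f' := by
    simpa only [Functor.map_comp] using
      HomotopyCategory.eq_of_homotopy _ _ hf.some
  have hg' : Qt.map g ≫ Qt.map k.hom = Qt.map i.hom ≫ Qt.map g' := by
    simpa only [Functor.map_comp] using
      HomotopyCategory.eq_of_homotopy _ _ hg.some
  have key : Qt.map (biprod.lift f (-g)) ≫ (Qt.mapBiprod B C).hom ≫
        biprod.map eB.hom eC.hom =
      Qt.map i.hom ≫ Qt.map (biprod.lift f' (-g')) ≫ (Qt.mapBiprod B' C').hom := by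
    rw [← Category.assoc, Limits.biprod.map_lift_mapBiprod,
      Limits.biprod.map_lift_mapBiprod]
    have heB : eB.hom = Qt.map j.hom := rfl
    have heC : eC.hom = Qt.map k.hom := rfl
    apply Limits.biprod.hom_ext
    · simp only [Category.assoc, biprod.lift_fst, biprod.map_fst, Functor.map_neg,
        Preadditive.neg_comp, Preadditive.comp_neg, heB, hf', biprod.lift_fst_assoc]
    · simp only [Category.assoc, biprod.lift_snd, biprod.map_snd, Functor.map_neg,
        Preadditive.neg_comp, Preadditive.comp_neg, heC, hg', biprod.lift_snd_assoc,
        neg_neg]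
  have comm : Qt.map (biprod.lift f (-g)) ≫ e₂.hom =
      e₁.hom ≫ Qt.map (biprod.lift f' (-g')) := by
    dsimp only [e₂, Iso.trans_hom, Iso.symm_hom, biprod.mapIso_hom]
    have he₁ : e₁.hom = Qt.map i.hom := rfl
    rw [he₁, ← Category.assoc, ← Category.assoc, Iso.comp_inv_eq,
      Category.assoc, Category.assoc]
    exact key
  let e₃ := Pretriangulated.isoTriangleOfIso₁₂ _ _ hT₁ hT₂ e₁ e₂ comm
  -- pass to the derived category
  refine ⟨(DerivedCategory.quotientCompQhIso (ModuleCat R)).symm.app _ ≪≫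
    DerivedCategory.Qh.mapIso ((Pretriangulated.Triangle.π₃).mapIso e₃) ≪≫
    (DerivedCategory.quotientCompQhIso (ModuleCat R)).app _⟩
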